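/- Let X be a spherical 2-design of size n in √m S^{m-1} which is an s-distance set of degree S = s. Then μ = tr(F_s) satisfies 0 < μ and μ(1 - μ/q_s(m)) = ⟨F_s,F_s⟩ - ⟨F̃_s,F̃_s⟩ ≥ 0, where F̃_s is the orthogonal projection of F_s onto 𝔄* = {(1/n)p((nG)^∘) : p ∈ ℝ[t]} with respect to the trace inner product ⟨R,S⟩ = tr(RᵀS); in particular q_s(m) > 0 and μ ≤ q_s(m). -/

import Mathlib

open scoped InnerProductSpace Classical

noncomputable section

variable {V : Type*} [NormedAddCommGroup V] [InnerProductSpace ℝ V]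

/-- `X` lies on the sphere of squared radius `m` (radius `√m`). -/
def onSphere (m : ℝ) (X : Finset V) : Prop := ∀ x ∈ X, ⟪x, x⟫_ℝ = m

/-- The normalized Gram matrix `G` of `X`. -/
def gram (X : Finset V) : Matrix X X ℝ :=
  Matrix.of fun x y => (1 / (X.card : ℝ)) * ⟪(x : V), (y : V)⟫_ℝ

/-- The two conditions characterizing spherical 2-designs: `GJ = 0` and `G² = G`. -/
def IsTwoDesign (X : Finset V) : Prop :=
  (∀ x ∈ X, ∑ y ∈ X, ⟪x, y⟫_ℝ = 0) ∧
  (∀ x ∈ X, ∀ y ∈ X, (1 / (X.card : ℝ)) * ∑ z ∈ X, ⟪x, z⟫_ℝ * ⟪z, y⟫_ℝ = ⟪x, y⟫_ℝ)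

/-- `Pol_k(X)`: span of the zonal polynomials of degree at most `k`. -/
def Pol (X : Finset V) (k : ℕ) : Submodule ℝ (X → ℝ) :=
  Submodule.span ℝ {f | ∃ a ∈ X, ∃ p : Polynomial ℝ,
    p.natDegree ≤ k ∧ f = fun x => p.eval ⟪a, x.1⟫_ℝ}

/-- The inner product `(f,g) = (1/n) ∑ f(x) g(x)` on `C(X)`. -/
def inn (X : Finset V) (f g : X → ℝ) : ℝ := (1 / (X.card : ℝ)) * ∑ x, f x * g x

def innL (X : Finset V) (f : X → ℝ) : (X → ℝ) →ₗ[ℝ] ℝ where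
  toFun g := inn X f g
  map_add' g h := by
    simp only [inn, Pi.add_apply, mul_add, Finset.sum_add_distrib]
  map_smul' c g := by
    simp only [inn, Pi.smul_apply, smul_eq_mul, RingHom.id_apply]
    rw [Finset.sum_congr rfl (fun x _ => by ring : ∀ x ∈ Finset.univ, f x * (c * g x) = c * (f x * g x)),
      ← Finset.mul_sum]
    ring

/-- The orthogonal complement of `W` with respect to `inn`. -/
def perp (X : Finset V) (W : Submodule ℝ (X → ℝ)) : Submodule ℝ (X → ℝ) :=
  ⨅ f ∈ W, LinearMap.ker (innL X f)

/-- The harmonic spaces `Harm_k(X)`. -/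
def Harm (X : Finset V) : ℕ → Submodule ℝ (X → ℝ)
  | 0 => Pol X 0
  | (k+1) => Pol X (k+1) ⊓ perp X (Pol X k)

/-- `F` is the matrix of the orthogonal projection of `C(X)` onto `W`
(with respect to the inner product `inn`). -/
def IsProjOnto (X : Finset V) (W : Submodule ℝ (X → ℝ)) (F : Matrix X X ℝ) : Prop :=
  (∀ f, F.mulVec f ∈ W) ∧ (∀ f ∈ W, F.mulVec f = f) ∧ (∀ f ∈ perp X W, F.mulVec f = 0)

/-- The degree `S` of `X`: the least `i` with `Pol_i(X) = C(X)`. -/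
def degS (X : Finset V) : ℕ := sInf {i | Pol X i = ⊤}

/-- `A(X)`, the set of inner products between distinct points of `X`. -/
def Aset (X : Finset V) : Finset ℝ :=
  ((X ×ˢ X).filter fun p => p.1 ≠ p.2).image fun p => ⟪p.1, p.2⟫_ℝ

/-- `A'(X) = A(X) ∪ {m}`. -/
def Aset' (m : ℝ) (X : Finset V) : Finset ℝ := insert m (Aset X)

/-- `κ_α`, the number of ordered pairs of points of `X` with inner product `α`. -/
def kappa (X : Finset V) (α : ℝ) : ℕ := ((X ×ˢ X).filter fun p => ⟪p.1, p.2⟫_ℝ = α).card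

/-- The inner product `⟨p,q⟩ = (1/n²) ∑_{α ∈ A'(X)} κ_α p(α) q(α)` on polynomials. -/
def pInn (m : ℝ) (X : Finset V) (p q : Polynomial ℝ) : ℝ :=
  (1 / (X.card : ℝ) ^ 2) * ∑ α ∈ Aset' m X, (kappa X α : ℝ) * (p.eval α * q.eval α)

/-- `q` is the family of predegree polynomials of `X`. -/
def IsPredegree (m : ℝ) (X : Finset V) (s : ℕ) (q : ℕ → Polynomial ℝ) : Prop :=
  (∀ k ≤ s, (q k).natDegree = k ∧ q k ≠ 0) ∧
  (∀ k ≤ s, ∀ h ≤ s, pInn m X (q k) (q h) = if k = h then (q k).eval m else 0)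

/-- The relation matrix `A_α` of `X`. -/
def relMat (X : Finset V) (α : ℝ) : Matrix X X ℝ :=
  Matrix.of fun x y => if ⟪(x : V), (y : V)⟫_ℝ = α then 1 else 0

/-- `X` carries the structure of a `Q`-polynomial association scheme with respect to
the idempotents `F_0, …, F_s` (whose relations are given by the inner products). -/
def CarriesQPolyScheme (m : ℝ) (X : Finset V) (s : ℕ) (F : ℕ → Matrix X X ℝ) : Prop :=
  (∀ α ∈ Aset' m X, ∀ β ∈ Aset' m X, relMat X α * relMat X β ∈
      Submodule.span ℝ (relMat X '' (Aset' m X : Set ℝ))) ∧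
  (∀ i ≤ s, F i ∈ Submodule.span ℝ (relMat X '' (Aset' m X : Set ℝ))) ∧
  (∀ i ≤ s, ∀ j ≤ s, F i * F j = if i = j then F i else 0) ∧
  (∑ i ∈ Finset.range (s + 1), F i = 1) ∧
  (F 0 = Matrix.of fun _ _ => 1 / (X.card : ℝ)) ∧
  (∀ i ≤ s, ∃ v : Polynomial ℝ, v.natDegree = i ∧
      F i = Matrix.of fun x y => (1 / (X.card : ℝ)) * v.eval ((X.card : ℝ) * F 1 x y))


open Matrix

/-! Write `Z p = zonalMat X p` for the matrix `p((nG)^∘)`, with entries `p(⟨x, y⟩)`.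
As `F_s` projects onto `Harm_s(X)`, which is orthogonal to `Pol_{s-1}(X)`, the pairing
`⟨F_s, Z q_k⟩` vanishes for `k < s`. The identity matrix is `Z p₀` for the Lagrange polynomial `p₀`
of `m` on `A'(X)`, of degree `s`. Expanding `p₀` in the predegree basis `q_0, …, q_s` and pairing
with `F_s` and with `Z q_s` (where `⟨Z q_k, Z q_s⟩ = n² δ_{ks} q_s(m)`) gives `⟨F_s, Z q_s⟩ = nμ`.
Hence `⟨F_s, F̃_s⟩ = ⟨F̃_s, F̃_s⟩ = μ²/q_s(m)`, so `⟨F_s, F_s⟩ - ⟨F̃_s, F̃_s⟩ = ‖F_s - F̃_s‖² ≥ 0`,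
while `⟨F_s, F_s⟩ = tr F_s = μ > 0` because `Harm_s(X) ≠ 0`. -/

namespace Polynomial

variable {K : Type*} [Field K] {s : ℕ} {q : ℕ → K[X]}

theorem degreeLT_le_span_image_Iio (hq : ∀ k < s, (q k).natDegree = k ∧ q k ≠ 0) :
    degreeLT K s ≤ Submodule.span K (q '' Set.Iio s) := by
  let S : Sequence K :=
    { elems' := fun k => if k < s then q k else X ^ k
      degree_eq' := fun k => by
        split_ifs with hk
        · rw [degree_eq_natDegree (hq k hk).2, (hq k hk).1]
        · exact degree_X_pow k }
  have hS : S '' Set.Iio s = q '' Set.Iio s :=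
    Set.image_congr fun k hk => if_pos (Set.mem_Iio.1 hk)
  rw [← hS, S.span_degreeLT fun k _ => (leadingCoeff_ne_zero.2 (S.ne_zero k)).isUnit]

theorem linearMap_apply_eq_of_forall_lt (hq : ∀ k ≤ s, (q k).natDegree = k ∧ q k ≠ 0)
    (L : K[X] →ₗ[K] K) (hL : ∀ k < s, L (q k) = 0) {p : K[X]} (hp : p.natDegree ≤ s) :
    L p = p.coeff s / (q s).leadingCoeff * L (q s) := by
  set c := p.coeff s / (q s).leadingCoeff
  have hlead : (q s).coeff s = (q s).leadingCoeff := by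
    rw [leadingCoeff, (hq s le_rfl).1]
  have hmem : p - C c * q s ∈ degreeLT K s := by
    rw [mem_degreeLT, degree_lt_iff_coeff_zero]
    intro k hk
    rcases hk.eq_or_lt with rfl | hk
    · rw [coeff_sub, coeff_C_mul, hlead,
        div_mul_cancel₀ _ (leadingCoeff_ne_zero.2 (hq s le_rfl).2), sub_self]
    · rw [coeff_sub, coeff_C_mul, coeff_eq_zero_of_natDegree_lt (hp.trans_lt hk),
        coeff_eq_zero_of_natDegree_lt ((hq s le_rfl).1.trans_lt hk), mul_zero, sub_zero]
  have hker : Submodule.span K (q '' Set.Iio s) ≤ LinearMap.ker L :=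
    Submodule.span_le.2 fun _ ⟨k, hk, hqk⟩ => hqk ▸ hL k hk
  have h0 := hker (degreeLT_le_span_image_Iio (fun k hk => hq k hk.le) hmem)
  rw [LinearMap.mem_ker, map_sub, sub_eq_zero] at h0
  rw [h0, ← smul_eq_C_mul, map_smul, smul_eq_mul]

end Polynomial

section projection

omit [NormedAddCommGroup V] [InnerProductSpace ℝ V]

lemma mem_perp_iff {X : Finset V} {W : Submodule ℝ (X → ℝ)} {g : X → ℝ} :
    g ∈ perp X W ↔ ∀ f ∈ W, inn X f g = 0 := by
  simp only [perp, Submodule.mem_iInf, LinearMap.mem_ker]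
  rfl

lemma dotProduct_eq_zero_of_mem_perp {X : Finset V} {W : Submodule ℝ (X → ℝ)} {f g : X → ℝ}
    (hf : f ∈ W) (hg : g ∈ perp X W) : f ⬝ᵥ g = 0 := by
  have h : (1 / (X.card : ℝ)) * (f ⬝ᵥ g) = 0 := mem_perp_iff.1 hg f hf
  rcases mul_eq_zero.1 h with hX | h
  · have : IsEmpty X := by
      rw [one_div, inv_eq_zero, Nat.cast_eq_zero, Finset.card_eq_zero] at hX
      subst hX
      infer_instance
    exact Fintype.sum_empty _
  · exact h

lemma exists_sub_mem_perp (X : Finset V) (W : Submodule ℝ (X → ℝ)) (v : X → ℝ) :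
    ∃ a ∈ W, v - a ∈ perp X W := by
  let e : EuclideanSpace ℝ X ≃ₗ[ℝ] (X → ℝ) := WithLp.linearEquiv 2 ℝ (X → ℝ)
  let W' : Submodule ℝ (EuclideanSpace ℝ X) := W.comap e.toLinearMap
  obtain ⟨a, ha, b, hb, hab⟩ := W'.exists_add_mem_mem_orthogonal (e.symm v)
  have hv : v - e a = e b := by
    rw [← e.apply_symm_apply v, hab, map_add, add_sub_cancel_left]
  refine ⟨e a, ha, hv ▸ mem_perp_iff.2 fun f hf => ?_⟩
  have h0 : inner ℝ (e.symm f) b = 0 :=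
    (Submodule.mem_orthogonal W' b).1 hb (e.symm f) (by simpa [W'] using hf)
  rw [PiLp.inner_apply] at h0
  simp only [inn, mul_eq_zero]
  right
  rw [← h0]
  exact Finset.sum_congr rfl fun x _ => by simp [e, WithLp.linearEquiv, mul_comm]

namespace IsProjOnto

variable {X : Finset V} {W : Submodule ℝ (X → ℝ)} {P : Matrix X X ℝ}

lemma sub_mulVec_mem_perp (hP : IsProjOnto X W P) (v : X → ℝ) : v - P *ᵥ v ∈ perp X W := by
  obtain ⟨a, ha, hva⟩ := exists_sub_mem_perp X W v
  have hPv : P *ᵥ v = a := by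
    rw [← add_sub_cancel a v, mulVec_add, hP.2.1 a ha, hP.2.2 _ hva, add_zero]
  rwa [hPv]

lemma mulVec_dotProduct (hP : IsProjOnto X W P) (v w : X → ℝ) :
    (P *ᵥ v) ⬝ᵥ w = (P *ᵥ v) ⬝ᵥ (P *ᵥ w) := by
  rw [← sub_eq_zero, ← dotProduct_sub]
  exact dotProduct_eq_zero_of_mem_perp (hP.1 v) (hP.sub_mulVec_mem_perp w)

lemma transpose_eq (hP : IsProjOnto X W P) : Pᵀ = P := by
  have hsymm : ∀ v w, (P *ᵥ v) ⬝ᵥ w = v ⬝ᵥ (P *ᵥ w) := fun v w => by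
    rw [hP.mulVec_dotProduct, dotProduct_comm, ← hP.mulVec_dotProduct, dotProduct_comm]
  ext x y
  simpa using hsymm (Pi.single x 1) (Pi.single y 1)

lemma mul_self (hP : IsProjOnto X W P) : P * P = P :=
  Matrix.ext_iff_mulVec.2 fun v => by rw [← Matrix.mulVec_mulVec, hP.2.1 _ (hP.1 v)]

lemma trace_transpose_mul_self (hP : IsProjOnto X W P) : (Pᵀ * P).trace = P.trace := by
  rw [hP.transpose_eq, hP.mul_self]

lemma trace_pos (hP : IsProjOnto X W P) (hW : W ≠ ⊥) : 0 < P.trace := by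
  obtain ⟨f, hf, hf0⟩ := (Submodule.ne_bot_iff W).1 hW
  have hP0 : P ≠ 0 := fun h => hf0 (by rw [← hP.2.1 f hf, h, Matrix.zero_mulVec])
  rw [← hP.trace_transpose_mul_self, ← Matrix.conjTranspose_eq_transpose_of_trivial]
  exact (Matrix.posSemidef_conjTranspose_mul_self P).trace_nonneg.lt_of_ne'
    (Matrix.trace_conjTranspose_mul_self_eq_zero_iff.not.2 hP0)

lemma trace_mul_eq_zero (hP : IsProjOnto X W P) {A : Matrix X X ℝ}
    (hA : ∀ v, A *ᵥ v ∈ perp X W) : (P * A).trace = 0 := by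
  have hPAP : P * A * P = 0 :=
    Matrix.ext_iff_mulVec.2 fun v => by
      rw [Matrix.zero_mulVec, ← Matrix.mulVec_mulVec, ← Matrix.mulVec_mulVec, hP.2.2 _ (hA _)]
  rw [← hP.mul_self, ← trace_mul_cycle, hPAP, trace_zero]

end IsProjOnto

end projection

lemma Pol_mono (X : Finset V) {k l : ℕ} (h : k ≤ l) : Pol X k ≤ Pol X l :=
  Submodule.span_mono fun _ ⟨a, ha, p, hp, hf⟩ => ⟨a, ha, p, hp.trans h, hf⟩

lemma Pol_le_perp_Harm_succ (X : Finset V) (t : ℕ) : Pol X t ≤ perp X (Harm X (t + 1)) :=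
  fun g hg => mem_perp_iff.2 fun f hf => by
    rw [inn, Finset.sum_congr rfl fun x _ => mul_comm (f x) (g x)]
    exact mem_perp_iff.1 (Submodule.mem_inf.1 hf).2 g hg

lemma Pol_succ_le_of_Harm_succ_eq_bot {X : Finset V} {t : ℕ} (h : Harm X (t + 1) = ⊥) :
    Pol X (t + 1) ≤ Pol X t := fun v hv => by
  obtain ⟨a, ha, hva⟩ := exists_sub_mem_perp X (Pol X t) v
  have hHarm : v - a ∈ Harm X (t + 1) :=
    Submodule.mem_inf.2 ⟨sub_mem hv (Pol_mono X t.le_succ ha), hva⟩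
  rw [h, Submodule.mem_bot, sub_eq_zero] at hHarm
  exact hHarm ▸ ha

lemma Harm_degS_ne_bot {X : Finset V} (hne : X.Nonempty) : Harm X (degS X) ≠ ⊥ := by
  intro hbot
  rcases hS : degS X with _ | t
  · obtain ⟨x, hx⟩ := hne
    have h1 : (fun _ => 1 : X → ℝ) ∈ Harm X 0 :=
      Submodule.subset_span ⟨x, hx, Polynomial.C 1, by simp, by simp⟩
    rw [← hS, hbot, Submodule.mem_bot] at h1
    exact one_ne_zero (congrFun h1 ⟨x, hx⟩)
  · have hS' : sInf {i | Pol X i = ⊤} = t + 1 := hS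
    have htop : Pol X (t + 1) = ⊤ :=
      hS' ▸ Nat.sInf_mem (Nat.nonempty_of_pos_sInf (s := {i | Pol X i = ⊤}) (by omega))
    have hnot : Pol X t ≠ ⊤ := Nat.notMem_of_lt_sInf (s := {i | Pol X i = ⊤}) (by omega)
    rw [hS] at hbot
    exact hnot (eq_top_iff.2 (htop.symm.le.trans (Pol_succ_le_of_Harm_succ_eq_bot hbot)))

def zonalMat (X : Finset V) : Polynomial ℝ →ₗ[ℝ] Matrix X X ℝ where
  toFun p := Matrix.of fun x y => p.eval ⟪x.1, y.1⟫_ℝ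
  map_add' p r := by ext; simp
  map_smul' c p := by ext; simp

section zonal

variable {m : ℝ} {X : Finset V}

@[simp]
lemma zonalMat_apply (p : Polynomial ℝ) (x y : X) : zonalMat X p x y = p.eval ⟪x.1, y.1⟫_ℝ :=
  rfl

lemma zonalMat_transpose (p : Polynomial ℝ) : (zonalMat X p)ᵀ = zonalMat X p := by
  ext x y
  simp [real_inner_comm]

lemma zonalMat_mulVec_mem_Pol {p : Polynomial ℝ} {k : ℕ} (hp : p.natDegree ≤ k) (w : X → ℝ) :
    zonalMat X p *ᵥ w ∈ Pol X k := by
  have hcols : zonalMat X p *ᵥ w = ∑ y : X, w y • fun x : X => p.eval ⟪y.1, x.1⟫_ℝ := by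
    ext x
    simp [mulVec, dotProduct, real_inner_comm, mul_comm]
  rw [hcols]
  exact Submodule.sum_mem _ fun y _ =>
    Submodule.smul_mem _ _ (Submodule.subset_span ⟨y.1, y.2, p, hp, rfl⟩)

lemma notMem_Aset (hsph : onSphere m X) : m ∉ Aset X := by
  intro hm
  obtain ⟨⟨x, y⟩, hp, hxy⟩ := Finset.mem_image.1 hm
  obtain ⟨hprod, hne⟩ := Finset.mem_filter.1 hp
  obtain ⟨hx, hy⟩ := Finset.mem_product.1 hprod
  dsimp only at hxy hne hx hy
  refine hne (sub_eq_zero.1 (inner_self_eq_zero (𝕜 := ℝ).1 ?_))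
  rw [inner_sub_left, inner_sub_right, inner_sub_right, hsph x hx, hsph y hy,
    real_inner_comm x y, hxy]
  ring

lemma card_Aset' (hsph : onSphere m X) : (Aset' m X).card = (Aset X).card + 1 :=
  Finset.card_insert_of_notMem (notMem_Aset hsph)

lemma inner_mem_Aset {x y : V} (hx : x ∈ X) (hy : y ∈ X) (hxy : x ≠ y) : ⟪x, y⟫_ℝ ∈ Aset X :=
  Finset.mem_image.2 ⟨(x, y), Finset.mem_filter.2 ⟨Finset.mem_product.2 ⟨hx, hy⟩, hxy⟩, rfl⟩

lemma inner_mem_Aset' (hsph : onSphere m X) {x y : V} (hx : x ∈ X) (hy : y ∈ X) :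
    ⟪x, y⟫_ℝ ∈ Aset' m X := by
  by_cases hxy : x = y
  · rw [hxy, hsph y hy]
    exact Finset.mem_insert_self _ _
  · exact Finset.mem_insert_of_mem (inner_mem_Aset hx hy hxy)

lemma sum_sum_inner_eq_sum_kappa (hsph : onSphere m X) (f : ℝ → ℝ) :
    ∑ x : X, ∑ y : X, f ⟪x.1, y.1⟫_ℝ = ∑ α ∈ Aset' m X, (kappa X α : ℝ) * f α := by
  have hprod : ∑ x : X, ∑ y : X, f ⟪x.1, y.1⟫_ℝ = ∑ p ∈ X ×ˢ X, f ⟪p.1, p.2⟫_ℝ := by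
    rw [Finset.sum_product, ← Finset.sum_coe_sort X fun x => ∑ y ∈ X, f ⟪x, y⟫_ℝ]
    exact Finset.sum_congr rfl fun x _ => Finset.sum_coe_sort X fun y => f ⟪x.1, y⟫_ℝ
  rw [hprod, ← Finset.sum_fiberwise_of_maps_to fun p hp => inner_mem_Aset' hsph
      (Finset.mem_product.1 hp).1 (Finset.mem_product.1 hp).2]
  refine Finset.sum_congr rfl fun α _ => ?_
  rw [kappa, Finset.sum_congr rfl fun p hp => congrArg f (Finset.mem_filter.1 hp).2,
    Finset.sum_const, nsmul_eq_mul]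

lemma trace_zonalMat (hsph : onSphere m X) (p : Polynomial ℝ) :
    (zonalMat X p).trace = X.card * p.eval m := by
  simp only [trace, diag_apply, zonalMat_apply]
  rw [Finset.sum_congr rfl fun x _ => by rw [hsph x.1 x.2], Finset.sum_const, Finset.card_univ,
    Fintype.card_coe, nsmul_eq_mul]

lemma trace_zonalMat_mul_zonalMat (hsph : onSphere m X) (p r : Polynomial ℝ) :
    (zonalMat X p * zonalMat X r).trace = (X.card : ℝ) ^ 2 * pInn m X p r := by
  rcases X.eq_empty_or_nonempty with hX | hne
  · have := Finset.isEmpty_coe_sort.2 hX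
    simp [trace, Finset.card_eq_zero.2 hX]
  rw [pInn, ← mul_assoc, mul_one_div_cancel (by positivity), one_mul,
    ← sum_sum_inner_eq_sum_kappa hsph fun t => p.eval t * r.eval t]
  simp only [trace, diag_apply, mul_apply, zonalMat_apply]
  exact Finset.sum_congr rfl fun x _ => Finset.sum_congr rfl fun y _ => by
    rw [real_inner_comm x.1 y.1]

lemma zonalMat_lagrange_basis (hsph : onSphere m X) :
    zonalMat X (Lagrange.basis (Aset' m X) id m) = 1 := by
  ext x y
  by_cases hxy : x = y
  · rw [hxy, zonalMat_apply, hsph _ y.2, one_apply_eq]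
    exact Lagrange.eval_basis_self (Set.injOn_id _) (Finset.mem_insert_self _ _)
  · have hmem := inner_mem_Aset x.2 y.2 (Subtype.coe_injective.ne hxy)
    rw [zonalMat_apply, one_apply_ne hxy]
    exact Lagrange.eval_basis_of_ne (v := id) (fun h => notMem_Aset hsph (h ▸ hmem))
      (Finset.mem_insert_of_mem hmem)

end zonal

lemma Matrix.trace_transpose_mul_self_le_of_trace_transpose_mul_eq {ι κ : Type*} [Fintype ι]
    [Fintype κ] {A B : Matrix ι κ ℝ} (h : (Aᵀ * B).trace = (Bᵀ * B).trace) :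
    (Bᵀ * B).trace ≤ (Aᵀ * A).trace := by
  have hBA : (Bᵀ * A).trace = (Aᵀ * B).trace := by
    rw [← trace_transpose, transpose_mul, transpose_transpose]
  have hsq := (posSemidef_conjTranspose_mul_self (A - B)).trace_nonneg
  rw [conjTranspose_eq_transpose_of_trivial, transpose_sub, Matrix.sub_mul, Matrix.mul_sub,
    Matrix.mul_sub, trace_sub, trace_sub, trace_sub, hBA, h] at hsq
  linarith

section predegree

variable {m : ℝ} {X : Finset V}

lemma kappa_pos (hne : X.Nonempty) (hsph : onSphere m X) {α : ℝ} (hα : α ∈ Aset' m X) :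
    0 < kappa X α := by
  rw [kappa, Finset.card_pos]
  rcases Finset.mem_insert.1 hα with rfl | hα
  · obtain ⟨x, hx⟩ := hne
    exact ⟨(x, x), Finset.mem_filter.2 ⟨Finset.mem_product.2 ⟨hx, hx⟩, hsph x hx⟩⟩
  · obtain ⟨p, hp, hpα⟩ := Finset.mem_image.1 hα
    exact ⟨p, Finset.mem_filter.2 ⟨(Finset.mem_filter.1 hp).1, hpα⟩⟩

lemma pInn_self_pos (hne : X.Nonempty) (hsph : onSphere m X) {p : Polynomial ℝ} (hp0 : p ≠ 0)
    (hp : p.natDegree < (Aset' m X).card) : 0 < pInn m X p p := by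
  obtain ⟨α, hα, hpα⟩ : ∃ α ∈ Aset' m X, p.eval α ≠ 0 := by
    by_contra! h
    exact hp0 (Polynomial.eq_zero_of_natDegree_lt_card_of_eval_eq_zero' p _ h hp)
  have hcard : (0 : ℝ) < X.card := by exact_mod_cast hne.card_pos
  refine mul_pos (one_div_pos.2 (pow_pos hcard 2)) (Finset.sum_pos'
    (fun β _ => mul_nonneg (Nat.cast_nonneg _) (mul_self_nonneg _)) ⟨α, hα, ?_⟩)
  exact mul_pos (by exact_mod_cast kappa_pos hne hsph hα) (mul_self_pos.2 hpα)

lemma IsPredegree.pInn_self {s : ℕ} {q : ℕ → Polynomial ℝ} (hq : IsPredegree m X s q) :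
    pInn m X (q s) (q s) = (q s).eval m := by
  simpa using hq.2 s le_rfl s le_rfl

lemma IsPredegree.eval_pos (hne : X.Nonempty) (hsph : onSphere m X) {s : ℕ}
    (hs : (Aset X).card = s) {q : ℕ → Polynomial ℝ} (hq : IsPredegree m X s q) :
    0 < (q s).eval m := by
  rw [← hq.pInn_self]
  refine pInn_self_pos hne hsph (hq.1 s le_rfl).2 ?_
  rw [card_Aset' hsph, hs, (hq.1 s le_rfl).1]
  exact s.lt_succ_self

lemma IsProjOnto.trace_mul_zonalMat_eq_zero {t : ℕ} {P : Matrix X X ℝ}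
    (hP : IsProjOnto X (Harm X (t + 1)) P) {p : Polynomial ℝ} (hp : p.natDegree ≤ t) :
    (P * zonalMat X p).trace = 0 :=
  hP.trace_mul_eq_zero fun v => Pol_le_perp_Harm_succ X t (zonalMat_mulVec_mem_Pol hp v)

lemma IsProjOnto.trace_mul_zonalMat_eq_card_mul_trace (hne : X.Nonempty)
    (hsph : onSphere m X) {s : ℕ} (hs : (Aset X).card = s) {P : Matrix X X ℝ} (hP : IsProjOnto X (Harm X s) P)
    {q : ℕ → Polynomial ℝ} (hq : IsPredegree m X s q) :
    (P * zonalMat X (q s)).trace = X.card * P.trace := by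
  let pairing (A : Matrix X X ℝ) : Polynomial ℝ →ₗ[ℝ] ℝ :=
    traceLinearMap X ℝ ℝ ∘ₗ LinearMap.mulLeft ℝ A ∘ₗ zonalMat X
  have hpairing (A : Matrix X X ℝ) (p : Polynomial ℝ) :
      pairing A p = (A * zonalMat X p).trace := rfl
  have hP_lt : ∀ k < s, pairing P (q k) = 0 := by
    intro k hk
    obtain ⟨t, rfl⟩ : ∃ t, s = t + 1 := ⟨s - 1, by omega⟩
    exact hP.trace_mul_zonalMat_eq_zero ((hq.1 k hk.le).1.trans_le (Nat.le_of_lt_succ hk))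
  have hq_lt : ∀ k < s, pairing (zonalMat X (q s)) (q k) = 0 := by
    intro k hk
    rw [hpairing, trace_zonalMat_mul_zonalMat hsph, hq.2 s le_rfl k hk.le, if_neg hk.ne',
      mul_zero]
  have hp₀ : (Lagrange.basis (Aset' m X) id m).natDegree ≤ s := by
    rw [Lagrange.natDegree_basis (s := Aset' m X) (Set.injOn_id _) (Finset.mem_insert_self _ _),
      card_Aset' hsph, hs, Nat.add_sub_cancel]
  have hP_p₀ := Polynomial.linearMap_apply_eq_of_forall_lt hq.1 _ hP_lt hp₀
  have hq_p₀ := Polynomial.linearMap_apply_eq_of_forall_lt hq.1 _ hq_lt hp₀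
  set c := (Lagrange.basis (Aset' m X) id m).coeff s / (q s).leadingCoeff
  -- `c` is the coefficient of `q s` in `p₀`; the second expansion shows `c = 1 / n`.
  rw [hpairing, hpairing, zonalMat_lagrange_basis hsph, Matrix.mul_one] at hP_p₀ hq_p₀
  rw [trace_zonalMat hsph, trace_zonalMat_mul_zonalMat hsph, hq.pInn_self] at hq_p₀
  have hn : (X.card : ℝ) * (q s).eval m ≠ 0 :=
    mul_ne_zero (by exact_mod_cast hne.card_pos.ne') (hq.eval_pos hne hsph hs).ne'
  have hc : c * X.card = 1 := by
    apply mul_right_cancel₀ hn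
    linear_combination -hq_p₀
  rw [hP_p₀]
  linear_combination (-(P * zonalMat X (q s)).trace) * hc

end predegree

theorem statement_14_general {m : ℕ} (X : Finset (EuclideanSpace ℝ (Fin m))) (hne : X.Nonempty)
    (hsph : onSphere (m : ℝ) X) (s : ℕ) (hs : (Aset X).card = s)
    (hdeg : degS X = s)
    (F : ℕ → Matrix X X ℝ) (hF : ∀ i, IsProjOnto X (Harm X i) (F i))
    (q : ℕ → Polynomial ℝ) (hq : IsPredegree (m : ℝ) X s q) :
    ∀ T : Matrix X X ℝ,
      T = (Matrix.of fun x y =>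
          (Matrix.trace (F s) / ((X.card : ℝ) * (q s).eval (m : ℝ))) *
            (q s).eval ⟪x.1, y.1⟫_ℝ) →
      0 < Matrix.trace (F s) ∧
      Matrix.trace (F s) * (1 - Matrix.trace (F s) / (q s).eval (m : ℝ)) =
        Matrix.trace ((F s).transpose * F s) - Matrix.trace (T.transpose * T) ∧
      0 ≤ Matrix.trace (F s) * (1 - Matrix.trace (F s) / (q s).eval (m : ℝ)) ∧
      0 < (q s).eval (m : ℝ) ∧
      Matrix.trace (F s) ≤ (q s).eval (m : ℝ) := by
  intro T hT
  have hqm := hq.eval_pos hne hsph hs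
  have hμ := (hF s).trace_pos (hdeg ▸ Harm_degS_ne_bot hne)
  have hFZ := (hF s).trace_mul_zonalMat_eq_card_mul_trace hne hsph hs hq
  replace hT : T = ((F s).trace / (X.card * (q s).eval (m : ℝ))) • zonalMat X (q s) := by
    rw [hT]
    ext x y
    simp
  set μ := (F s).trace
  set qm := (q s).eval (m : ℝ)
  have hqs : pInn m X (q s) (q s) = qm := hq.pInn_self
  have hTT : (Tᵀ * T).trace = μ ^ 2 / qm := by
    rw [hT, transpose_smul, zonalMat_transpose, smul_mul_smul_comm, trace_smul,
      trace_zonalMat_mul_zonalMat hsph, hqs, smul_eq_mul]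
    field_simp
  have hFT : ((F s)ᵀ * T).trace = (Tᵀ * T).trace := by
    rw [hTT, (hF s).transpose_eq, hT, mul_smul_comm, trace_smul, hFZ, smul_eq_mul]
    field_simp
  have hgap : μ * (1 - μ / qm) = ((F s)ᵀ * F s).trace - (Tᵀ * T).trace := by
    rw [(hF s).trace_transpose_mul_self, hTT]
    ring
  have hgap_nonneg : 0 ≤ μ * (1 - μ / qm) :=
    hgap ▸ sub_nonneg.2 (trace_transpose_mul_self_le_of_trace_transpose_mul_eq hFT)
  refine ⟨hμ, hgap, hgap_nonneg, hqm, ?_⟩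
  have := nonneg_of_mul_nonneg_right hgap_nonneg hμ
  rwa [sub_nonneg, div_le_one hqm] at this

theorem statement_14 {m : ℕ} (X : Finset (EuclideanSpace ℝ (Fin m))) (hne : X.Nonempty)
    (hsph : onSphere (m : ℝ) X) (hdes : IsTwoDesign X) (s : ℕ) (hs : (Aset X).card = s)
    (hdeg : degS X = s)
    (F : ℕ → Matrix X X ℝ) (hF : ∀ i, IsProjOnto X (Harm X i) (F i))
    (q : ℕ → Polynomial ℝ) (hq : IsPredegree (m : ℝ) X s q) :
    ∀ T : Matrix X X ℝ,
      T = (Matrix.of fun x y =>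
          (Matrix.trace (F s) / ((X.card : ℝ) * (q s).eval (m : ℝ))) *
            (q s).eval ⟪x.1, y.1⟫_ℝ) →
      0 < Matrix.trace (F s) ∧
      Matrix.trace (F s) * (1 - Matrix.trace (F s) / (q s).eval (m : ℝ)) =
        Matrix.trace ((F s).transpose * F s) - Matrix.trace (T.transpose * T) ∧
      0 ≤ Matrix.trace (F s) * (1 - Matrix.trace (F s) / (q s).eval (m : ℝ)) ∧
      0 < (q s).eval (m : ℝ) ∧
      Matrix.trace (F s) ≤ (q s).eval (m : ℝ) :=
  statement_14_general X hne hsph s hs hdeg F hF q hq
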